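/- Directed single linkage is stable: for all finite networks N_X and N_Y, d_N((X, ũ*_X), (Y, ũ*_Y)) ≤ d_N(N_X, N_Y), where ũ*_X and ũ*_Y are the directed minimum chain cost quasi-ultrametrics of N_X and N_Y respectively. -/

import Mathlib

/-!
Fix a correspondence `R` of distortion `η` and `(x, y), (x', y') ∈ R`. A chain
`x = x₀, …, xₗ = x'` in `X` is transported to the chain `y = y₀, y₁, …, yₗ = y'` with
`(xᵢ, yᵢ) ∈ R`, whose links exceed those of the original chain by at most `η`; for `l = 0` the
transported chain is `y, y'`, whose link is compared with `A_X(x, x) = 0`. Hence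
`ũ*_Y(y, y') ≤ ũ*_X(x, x') + η`, symmetrically, and so `R` distorts `ũ*` by at most `η`.
-/

/-- The cost of a chain: maximum dissimilarity over consecutive links. -/
def chainCost {X : Type*} (A : X → X → ℝ) : List X → ℝ
  | [] => 0
  | [_] => 0
  | a :: b :: rest => max (A a b) (chainCost A (b :: rest))

/-- The directed minimum chain cost `ũ*` of a network `(X, A)`: the minimum,
over all chains from `x` to `x'`, of the maximum link dissimilarity. -/
noncomputable def dmcc {X : Type*} (A : X → X → ℝ) (x x' : X) : ℝ :=
  sInf {r | ∃ c : List X, c.head? = some x ∧ c.getLast? = some x' ∧ chainCost A c = r}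

/-- A correspondence between `X` and `Y`: a relation projecting onto both. -/
def IsCorrespondence {X Y : Type*} (R : Set (X × Y)) : Prop :=
  (∀ x : X, ∃ y : Y, (x, y) ∈ R) ∧ (∀ y : Y, ∃ x : X, (x, y) ∈ R)

/-- The distortion of a correspondence `R` between networks `(X, AX)` and
`(Y, AY)`. -/
noncomputable def distortion {X Y : Type*} (AX : X → X → ℝ) (AY : Y → Y → ℝ)
    (R : Set (X × Y)) : ℝ :=
  sSup {r | ∃ p ∈ R, ∃ q ∈ R, r = |AX p.1 q.1 - AY p.2 q.2|}

/-- The network distance: half the minimal distortion over correspondences. -/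
noncomputable def netDist {X Y : Type*} (AX : X → X → ℝ) (AY : Y → Y → ℝ) : ℝ :=
  (1/2) * sInf {r | ∃ R : Set (X × Y), IsCorrespondence R ∧ r = distortion AX AY R}

open Relation

namespace Relation.ReflTransGen

variable {X Y : Type*} {r : X → X → Prop} {s : Y → Y → Prop} {R : Set (X × Y)}

theorem lift_rel (hR : ∀ x, ∃ y, (x, y) ∈ R) (hrs : ∀ p ∈ R, ∀ q ∈ R, r p.1 q.1 → s p.2 q.2)
    {x x' : X} {y y' : Y} (hx : r x x) (hxy : (x, y) ∈ R) (hxy' : (x', y') ∈ R)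
    (h : ReflTransGen r x x') : ReflTransGen s y y' := by
  induction h generalizing y' with
  | refl => exact .single (hrs _ hxy _ hxy' hx)
  | tail _ hab ih =>
    obtain ⟨b, hb⟩ := hR _
    exact (ih hb).tail (hrs _ hb _ hxy' hab)

end Relation.ReflTransGen

section ChainCost

variable {X : Type*} (A : X → X → ℝ)

theorem chainCost_nonneg : ∀ c : List X, 0 ≤ chainCost A c
  | [] | [_] => le_rfl
  | _ :: b :: rest => le_max_of_le_right (chainCost_nonneg (b :: rest))

theorem chainCost_le_iff {B : ℝ} (hB : 0 ≤ B) :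
    ∀ c : List X, chainCost A c ≤ B ↔ c.IsChain (fun a b => A a b ≤ B)
  | [] | [_] => by simp [chainCost, hB]
  | a :: b :: rest => by
    rw [chainCost, max_le_iff, chainCost_le_iff hB (b :: rest), List.isChain_cons_cons]

theorem reflTransGen_of_chain {c : List X} {x x' : X} (hx : c.head? = some x)
    (hx' : c.getLast? = some x') : ReflTransGen (fun a b => A a b ≤ chainCost A c) x x' := by
  obtain _ | ⟨_, l⟩ := c
  · simp at hx
  obtain rfl := Option.some_inj.mp hx
  rw [List.getLast?_eq_some_getLast (List.cons_ne_nil _ _), Option.some_inj] at hx'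
  exact List.relationReflTransGen_of_exists_isChain_cons l
    ((chainCost_le_iff A (chainCost_nonneg A _) _).mp le_rfl) hx'

theorem dmcc_le_of_reflTransGen {B : ℝ} (hB : 0 ≤ B) {x x' : X}
    (h : ReflTransGen (fun a b => A a b ≤ B) x x') : dmcc A x x' ≤ B := by
  obtain ⟨l, hl, hlast⟩ := List.exists_isChain_cons_of_relationReflTransGen h
  have hmem : chainCost A (x :: l) ∈
      {r | ∃ c : List X, c.head? = some x ∧ c.getLast? = some x' ∧ chainCost A c = r} :=
    ⟨x :: l, rfl, by rw [List.getLast?_eq_some_getLast (List.cons_ne_nil _ _), hlast], rfl⟩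
  have hbdd : BddBelow
      {r | ∃ c : List X, c.head? = some x ∧ c.getLast? = some x' ∧ chainCost A c = r} :=
    ⟨0, by rintro _ ⟨c, -, -, rfl⟩; exact chainCost_nonneg A c⟩
  exact (csInf_le hbdd hmem).trans ((chainCost_le_iff A hB _).mpr hl)

end ChainCost

section Distortion

variable {X Y : Type*} {AX : X → X → ℝ} {AY : Y → Y → ℝ} {R : Set (X × Y)}

theorem distortion_nonneg : 0 ≤ distortion AX AY R :=
  Real.sSup_nonneg (by rintro _ ⟨p, -, q, -, rfl⟩; exact abs_nonneg _)

theorem le_distortion [Finite X] [Finite Y] {p q : X × Y} (hp : p ∈ R) (hq : q ∈ R) :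
    |AX p.1 q.1 - AY p.2 q.2| ≤ distortion AX AY R := by
  have hfin : {r | ∃ p ∈ R, ∃ q ∈ R, r = |AX p.1 q.1 - AY p.2 q.2|}.Finite :=
    (Set.finite_range fun pq : (X × Y) × (X × Y) => |AX pq.1.1 pq.2.1 - AY pq.1.2 pq.2.2|).subset
      (by rintro _ ⟨p, -, q, -, rfl⟩; exact ⟨(p, q), rfl⟩)
  exact le_csSup hfin.bddAbove ⟨p, hp, q, hq, rfl⟩

theorem dmcc_le_dmcc_add (hR : ∀ x, ∃ y, (x, y) ∈ R) (hAX : ∀ x, AX x x = 0) {η : ℝ}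
    (hη : ∀ p ∈ R, ∀ q ∈ R, |AX p.1 q.1 - AY p.2 q.2| ≤ η)
    {x x' : X} {y y' : Y} (hxy : (x, y) ∈ R) (hxy' : (x', y') ∈ R) :
    dmcc AY y y' ≤ dmcc AX x x' + η := by
  have hη_nonneg : 0 ≤ η := (abs_nonneg _).trans (hη _ hxy _ hxy)
  rw [← sub_le_iff_le_add]
  refine le_csInf ⟨_, [x, x'], rfl, rfl, rfl⟩ ?_
  rintro _ ⟨c, hcx, hcx', rfl⟩
  rw [sub_le_iff_le_add]
  refine dmcc_le_of_reflTransGen AY (add_nonneg (chainCost_nonneg AX c) hη_nonneg) ?_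
  refine (reflTransGen_of_chain AX hcx hcx').lift_rel hR (fun p hp q hq hpq => ?_)
    ((hAX x).symm ▸ chainCost_nonneg AX c) hxy hxy'
  linarith [(abs_le.mp (hη p hp q hq)).1]

theorem distortion_dmcc_le [Finite X] [Finite Y] (hAX : ∀ x, AX x x = 0)
    (hAY : ∀ y, AY y y = 0) (hR : IsCorrespondence R) :
    distortion (dmcc AX) (dmcc AY) R ≤ distortion AX AY R := by
  refine Real.sSup_le ?_ distortion_nonneg
  rintro _ ⟨p, hp, q, hq, rfl⟩
  have hη : ∀ p ∈ R, ∀ q ∈ R, |AX p.1 q.1 - AY p.2 q.2| ≤ distortion AX AY R :=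
    fun p hp q hq => le_distortion hp hq
  have hYX : dmcc AY p.2 q.2 ≤ dmcc AX p.1 q.1 + distortion AX AY R :=
    dmcc_le_dmcc_add hR.1 hAX hη hp hq
  have hXY : dmcc AX p.1 q.1 ≤ dmcc AY p.2 q.2 + distortion AX AY R :=
    dmcc_le_dmcc_add (R := Prod.swap ⁻¹' R) (fun y => hR.2 y) hAY
      (fun p hp q hq => abs_sub_comm (AX _ _) (AY _ _) ▸ hη _ hp _ hq) hp hq
  exact abs_sub_le_iff.mpr ⟨by linarith, by linarith⟩

theorem netDist_le_netDist {BX : X → X → ℝ} {BY : Y → Y → ℝ}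
    (h : ∀ R : Set (X × Y), IsCorrespondence R → distortion BX BY R ≤ distortion AX AY R) :
    netDist BX BY ≤ netDist AX AY := by
  refine mul_le_mul_of_nonneg_left ?_ (by norm_num)
  by_cases hne : ∃ R : Set (X × Y), IsCorrespondence R
  · obtain ⟨R, hR⟩ := hne
    refine le_csInf ⟨_, R, hR, rfl⟩ ?_
    rintro _ ⟨R', hR', rfl⟩
    have hbdd : BddBelow {r | ∃ R : Set (X × Y), IsCorrespondence R ∧ r = distortion BX BY R} :=
      ⟨0, by rintro _ ⟨_, -, rfl⟩; exact distortion_nonneg⟩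
    exact (csInf_le hbdd ⟨R', hR', rfl⟩).trans (h R' hR')
  · simp [not_exists.mp hne]

end Distortion

theorem dsl_stable_general {X Y : Type*}
    [Fintype X] [Fintype Y]
    (AX : X → X → ℝ) (AY : Y → Y → ℝ)
    (hXid : ∀ x x', AX x x' = 0 ↔ x = x')
    (hYid : ∀ y y', AY y y' = 0 ↔ y = y') :
    netDist (dmcc AX) (dmcc AY) ≤ netDist AX AY :=
  netDist_le_netDist fun _ hR =>
    distortion_dmcc_le (fun x => (hXid x x).2 rfl) (fun y => (hYid y y).2 rfl) hR

/-- Directed single linkage is stable: the network distance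
between the output quasi-ultrametrics is bounded by the network distance
between the input networks. -/
theorem dsl_stable {X Y : Type*}
    [Fintype X] [Fintype Y] [Nonempty X] [Nonempty Y]
    (AX : X → X → ℝ) (AY : Y → Y → ℝ)
    (hXnonneg : ∀ x x', 0 ≤ AX x x') (hXid : ∀ x x', AX x x' = 0 ↔ x = x')
    (hYnonneg : ∀ y y', 0 ≤ AY y y') (hYid : ∀ y y', AY y y' = 0 ↔ y = y') :
    netDist (dmcc AX) (dmcc AY) ≤ netDist AX AY :=
  dsl_stable_general AX AY hXid hYid
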